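/- For integers 1 ≤ k ≤ T, define ζ_k = ((1/√T + 1)/(1/√T + k)) · ∏_{m=k+1}^{T} (m-1)/(1/√T + m). Then for all 2 ≤ k ≤ T, ζ_k - ζ_{k-1} = ((1/√T)(1/√T + 1)/(T(T+1))) · ∏_{m=k}^{T+1} m/(1/√T + m - 1). -/

import Mathlib

/-!
Write `s = 1/√T` and `ζ_k = zetaCoeff s T k`. Peeling the factor `m = k + 1` off the product gives
`ζ_k = k/(s+k) · ζ_{k+1}`, hence `ζ_{k+1} - ζ_k = s/(s+k) · ζ_{k+1}`. The right-hand side satisfies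
the same first-order recurrence in `k` (again by peeling off the bottom factor), and the two agree
at `k + 1 = T`, so they agree for every `k < T` by downward induction.
-/

open Finset

noncomputable def zetaCoeff (s : ℝ) (T k : ℕ) : ℝ :=
  (s + 1) / (s + k) * ∏ m ∈ Icc (k + 1) T, ((m : ℝ) - 1) / (s + m)

lemma prod_Icc_eq_mul_prod_Icc_succ {M : Type*} [CommMonoid M] {a b : ℕ} (hab : a ≤ b)
    (f : ℕ → M) : ∏ m ∈ Icc a b, f m = f a * ∏ m ∈ Icc (a + 1) b, f m := by
  rw [Icc_add_one_left_eq_Ioc, mul_prod_Ioc_eq_prod_Icc hab]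

lemma zetaCoeff_eq_mul_zetaCoeff_succ (s : ℝ) {T k : ℕ} (hk : k + 1 ≤ T) :
    zetaCoeff s T k = k / (s + k) * zetaCoeff s T (k + 1) := by
  rw [zetaCoeff, zetaCoeff, prod_Icc_eq_mul_prod_Icc_succ hk]
  push_cast
  ring

lemma zetaCoeff_succ_sub_zetaCoeff {s : ℝ} {T k : ℕ} (hsk : s + k ≠ 0) (hk : k + 1 ≤ T) :
    zetaCoeff s T (k + 1) - zetaCoeff s T k = s / (s + k) * zetaCoeff s T (k + 1) := by
  rw [zetaCoeff_eq_mul_zetaCoeff_succ s hk]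
  field_simp
  ring

lemma prod_Icc_div_eq_mul_prod_Icc_succ (s : ℝ) {k T : ℕ} (hk : k ≤ T) :
    ∏ m ∈ Icc (k + 1) (T + 1), (m : ℝ) / (s + m - 1) =
      (k + 1) / (s + k) * ∏ m ∈ Icc (k + 2) (T + 1), (m : ℝ) / (s + m - 1) := by
  rw [prod_Icc_eq_mul_prod_Icc_succ (by omega)]
  push_cast
  ring_nf

lemma mul_prod_Icc_div_eq_mul_zetaCoeff {s : ℝ} (hs : 0 < s) {T k : ℕ} (hk : k + 1 ≤ T) :
    s * (s + 1) / (T * (T + 1)) * ∏ m ∈ Icc (k + 1) (T + 1), (m : ℝ) / (s + m - 1) =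
      s / (s + k) * zetaCoeff s T (k + 1) := by
  obtain ⟨j, hT⟩ := Nat.exists_eq_add_of_le hk
  have : s + k ≠ 0 := by positivity
  have : s + (k + 1) ≠ 0 := by positivity
  induction j generalizing k with
  | zero =>
    subst hT
    rw [prod_Icc_div_eq_mul_prod_Icc_succ s (by omega),
      prod_Icc_div_eq_mul_prod_Icc_succ s (by omega), Icc_eq_empty (by omega), prod_empty,
      zetaCoeff, Icc_eq_empty (by omega), prod_empty]
    push_cast
    field_simp
    ring
  | succ j ih =>
    rw [prod_Icc_div_eq_mul_prod_Icc_succ s (by omega),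
      zetaCoeff_eq_mul_zetaCoeff_succ s (k := k + 1) (by omega), mul_left_comm,
      ih (k := k + 1) (by omega) (by omega) (by positivity) (by positivity)]
    push_cast
    ring

theorem zeta_difference_identity_general
    (T : ℕ) (ζ : ℕ → ℝ)
    (hζ : ∀ k : ℕ, ζ k = ((1 / Real.sqrt T + 1) / (1 / Real.sqrt T + k)) *
      ∏ m ∈ Finset.Icc (k + 1) T, ((m : ℝ) - 1) / (1 / Real.sqrt T + m))
    (k : ℕ) (hk : 2 ≤ k) (hkT : k ≤ T) :
    ζ k - ζ (k - 1) = ((1 / Real.sqrt T) * (1 / Real.sqrt T + 1) / (T * (T + 1))) *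
      ∏ m ∈ Finset.Icc k (T + 1), (m : ℝ) / (1 / Real.sqrt T + m - 1) := by
  obtain ⟨j, rfl⟩ := Nat.exists_eq_add_of_le' (show 1 ≤ k by omega)
  have hs : 0 < 1 / Real.sqrt T := by
    have : 0 < T := by omega
    positivity
  have hζ_eq : ζ = zetaCoeff (1 / Real.sqrt T) T := funext hζ
  rw [hζ_eq, Nat.add_sub_cancel, zetaCoeff_succ_sub_zetaCoeff (by positivity) hkT,
    mul_prod_Icc_div_eq_mul_zetaCoeff hs hkT]

theorem zeta_difference_identity
    (T : ℕ) (hT : 1 ≤ T) (ζ : ℕ → ℝ)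
    (hζ : ∀ k : ℕ, ζ k = ((1 / Real.sqrt T + 1) / (1 / Real.sqrt T + k)) *
      ∏ m ∈ Finset.Icc (k + 1) T, ((m : ℝ) - 1) / (1 / Real.sqrt T + m))
    (k : ℕ) (hk : 2 ≤ k) (hkT : k ≤ T) :
    ζ k - ζ (k - 1) = ((1 / Real.sqrt T) * (1 / Real.sqrt T + 1) / (T * (T + 1))) *
      ∏ m ∈ Finset.Icc k (T + 1), (m : ℝ) / (1 / Real.sqrt T + m - 1) :=
  zeta_difference_identity_general T ζ hζ k hk hkT
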